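/- arXiv:2210.10743 — 5 statements merged into one kernel-verified Lean document; each statement's English description precedes it below -/
import Mathlib

section
/- Let X be a measurable space in which all singletons are measurable, let x : Fin M → X and y : Fin N → X be points, let p : Fin M → ℝ and q : Fin N → ℝ be probability weights, and let c : X → X → ℝ be a ground cost that is a divergence, i.e. c a b ≥ 0 for all a, b ∈ X and c a b = 0 if and only if a = b. Then the discrete optimal transport loss satisfies L_c(x,p;y,q) ≥ 0, and L_c(x,p;y,q) = 0 if and only if the two finitely supported measures coincide: ∑_{i} p i • δ_{x i} = ∑_{j} q j • δ_{y j}, where δ_z denotes the Dirac measure at z. -/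
open MeasureTheory

/-- The set of values of the transport objective over all couplings of the
discrete probability weights `p` and `q`, with ground cost `c` on points `x`, `y`. -/
def discreteOTValues {X : Type*} {M N : ℕ} (x : Fin M → X) (y : Fin N → X)
    (p : Fin M → ℝ) (q : Fin N → ℝ) (c : X → X → ℝ) : Set ℝ :=
  {v | ∃ π : Fin M → Fin N → ℝ,
    (∀ i j, 0 ≤ π i j) ∧ (∀ i, ∑ j, π i j = p i) ∧ (∀ j, ∑ i, π i j = q j) ∧
    v = ∑ i, ∑ j, c (x i) (y j) * π i j}

namespace DOTAux

open Finset
open scoped Classical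

variable {X : Type*} {M N : ℕ}

lemma values_nonneg {x : Fin M → X} {y : Fin N → X} {p : Fin M → ℝ} {q : Fin N → ℝ}
    {c : X → X → ℝ} (hc0 : ∀ a b, 0 ≤ c a b) :
    ∀ v ∈ discreteOTValues x y p q c, 0 ≤ v := by
  rintro v ⟨π, hπ0, -, -, rfl⟩
  exact Finset.sum_nonneg fun i _ => Finset.sum_nonneg fun j _ =>
    mul_nonneg (hc0 _ _) (hπ0 i j)

lemma values_nonempty (x : Fin M → X) (y : Fin N → X) {p : Fin M → ℝ} {q : Fin N → ℝ}
    (hp : ∀ i, 0 ≤ p i) (hq : ∀ j, 0 ≤ q j)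
    (hps : ∑ i, p i = 1) (hqs : ∑ j, q j = 1) (c : X → X → ℝ) :
    (discreteOTValues x y p q c).Nonempty := by
  refine ⟨_, fun i j => p i * q j, fun i j => mul_nonneg (hp i) (hq j), ?_, ?_, rfl⟩
  · intro i; rw [← Finset.mul_sum, hqs, mul_one]
  · intro j; rw [← Finset.sum_mul, hps, one_mul]

lemma values_symm (x : Fin M → X) (y : Fin N → X) (p : Fin M → ℝ) (q : Fin N → ℝ)
    (c : X → X → ℝ) :
    discreteOTValues x y p q c = discreteOTValues y x q p (fun a b => c b a) := by
  ext v
  constructor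
  · rintro ⟨π, h0, hr, hc, rfl⟩
    exact ⟨fun j i => π i j, fun j i => h0 i j, hc, hr, by rw [Finset.sum_comm]⟩
  · rintro ⟨π, h0, hr, hc, rfl⟩
    exact ⟨fun i j => π j i, fun i j => h0 j i, hc, hr, by rw [Finset.sum_comm]⟩

/-- Key lower bound: if the mass of `q` at `z` is less than that of `p`,
every transport value is bounded below by a positive constant. -/
lemma key_lb {x : Fin M → X} {y : Fin N → X} {p : Fin M → ℝ} {q : Fin N → ℝ}
    (hp : ∀ i, 0 ≤ p i) (hps : ∑ i, p i = 1) (hqs : ∑ j, q j = 1)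
    {c : X → X → ℝ} (hc0 : ∀ a b, 0 ≤ c a b) (hceq : ∀ a b : X, c a b = 0 ↔ a = b)
    (z : X)
    (hlt : (∑ j ∈ univ.filter fun j => y j = z, q j) <
           (∑ i ∈ univ.filter fun i => x i = z, p i)) :
    ∃ ε > 0, ∀ v ∈ discreteOTValues x y p q c, ε ≤ v := by
  classical
  set P : ℝ := ∑ i ∈ univ.filter fun i => x i = z, p i with hP
  set Q : ℝ := ∑ j ∈ univ.filter fun j => y j = z, q j with hQ
  set A : Finset (Fin M) := univ.filter fun i => x i = z with hA
  set S : Finset (Fin N) := univ.filter fun j => ¬ (y j = z) with hS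
  have hSne : S.Nonempty := by
    by_contra h
    rw [Finset.not_nonempty_iff_eq_empty] at h
    have hall : ∀ j, y j = z := by
      intro j
      by_contra hj
      have hjS : j ∈ S := by simp [hS, hj]
      simp [h] at hjS
    have hQ1 : Q = 1 := by
      rw [hQ, Finset.filter_true_of_mem (fun j _ => hall j)]
      exact hqs
    have hP1 : P ≤ 1 := by
      rw [← hps]
      exact Finset.sum_le_sum_of_subset_of_nonneg (Finset.subset_univ _)
        (fun i _ _ => hp i)
    rw [hQ1] at hlt
    linarith
  set ε0 : ℝ := S.inf' hSne (fun j => c z (y j)) with hε0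
  have hε0pos : 0 < ε0 := by
    rw [hε0, Finset.lt_inf'_iff]
    intro j hj
    have hne : ¬ (y j = z) := by simpa [hS] using hj
    rcases lt_or_eq_of_le (hc0 z (y j)) with h | h
    · exact h
    · exact absurd ((hceq z (y j)).mp h.symm).symm hne
  refine ⟨ε0 * (P - Q), mul_pos hε0pos (sub_pos.mpr hlt), ?_⟩
  rintro v ⟨π, hπ0, hrow, hcol, rfl⟩
  -- the mass transported from A to S is at least P - Q
  have hmass : P - Q ≤ ∑ i ∈ A, ∑ j ∈ S, π i j := by
    have hsplit : ∀ i, (∑ j ∈ univ.filter fun j => y j = z, π i j) + ∑ j ∈ S, π i j = p i := by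
      intro i
      rw [hS, Finset.sum_filter_add_sum_filter_not, hrow i]
    have h1 : ∑ i ∈ A, ∑ j ∈ S, π i j
        = P - ∑ i ∈ A, ∑ j ∈ univ.filter (fun j => y j = z), π i j := by
      have hterm : ∀ i ∈ A, ∑ j ∈ S, π i j
          = p i - ∑ j ∈ univ.filter (fun j => y j = z), π i j := by
        intro i _
        have := hsplit i
        linarith
      rw [Finset.sum_congr rfl hterm, Finset.sum_sub_distrib, hP]
    have h2 : ∑ i ∈ A, ∑ j ∈ univ.filter (fun j => y j = z), π i j ≤ Q := by
      calc ∑ i ∈ A, ∑ j ∈ univ.filter (fun j => y j = z), π i j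
          ≤ ∑ i, ∑ j ∈ univ.filter (fun j => y j = z), π i j :=
            Finset.sum_le_sum_of_subset_of_nonneg (Finset.subset_univ _)
              (fun i _ _ => Finset.sum_nonneg fun j _ => hπ0 i j)
        _ = ∑ j ∈ univ.filter (fun j => y j = z), ∑ i, π i j := Finset.sum_comm
        _ = Q := by rw [hQ]; exact Finset.sum_congr rfl fun j _ => hcol j
    rw [h1]
    linarith
  -- the cost is at least ε0 times that mass
  calc ε0 * (P - Q) ≤ ε0 * ∑ i ∈ A, ∑ j ∈ S, π i j :=
        mul_le_mul_of_nonneg_left hmass hε0pos.le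
    _ = ∑ i ∈ A, ∑ j ∈ S, ε0 * π i j := by
        rw [Finset.mul_sum]; exact Finset.sum_congr rfl fun i _ => Finset.mul_sum _ _ _
    _ ≤ ∑ i ∈ A, ∑ j ∈ S, c (x i) (y j) * π i j := by
        refine Finset.sum_le_sum fun i hi => Finset.sum_le_sum fun j hj => ?_
        have hxi : x i = z := by simpa [hA] using hi
        have hle : ε0 ≤ c (x i) (y j) := by
          rw [hxi]; exact Finset.inf'_le _ hj
        exact mul_le_mul_of_nonneg_right hle (hπ0 i j)
    _ ≤ ∑ i ∈ A, ∑ j, c (x i) (y j) * π i j := by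
        refine Finset.sum_le_sum fun i _ => ?_
        exact Finset.sum_le_sum_of_subset_of_nonneg (Finset.subset_univ _)
          (fun j _ _ => mul_nonneg (hc0 _ _) (hπ0 i j))
    _ ≤ ∑ i, ∑ j, c (x i) (y j) * π i j :=
        Finset.sum_le_sum_of_subset_of_nonneg (Finset.subset_univ _)
          (fun i _ _ => Finset.sum_nonneg fun j _ => mul_nonneg (hc0 _ _) (hπ0 i j))

lemma measure_apply (x : Fin M → X) (p : Fin M → ℝ) [MeasurableSpace X]
    [MeasurableSingletonClass X] (s : Set X) :
    (∑ i, ENNReal.ofReal (p i) • Measure.dirac (x i)) s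
      = ∑ i, if x i ∈ s then ENNReal.ofReal (p i) else 0 := by
  classical
  rw [Measure.finset_sum_apply]
  refine Finset.sum_congr rfl fun i _ => ?_
  rw [Measure.smul_apply, Measure.dirac_apply, Set.indicator_apply]
  by_cases h : x i ∈ s <;> simp [h]

/-- Equality of the two discrete measures is equivalent to equality of pointwise masses. -/
lemma measure_eq_iff [MeasurableSpace X] [MeasurableSingletonClass X]
    (x : Fin M → X) (y : Fin N → X) {p : Fin M → ℝ} {q : Fin N → ℝ}
    (hp : ∀ i, 0 ≤ p i) (hq : ∀ j, 0 ≤ q j) :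
    (∑ i, ENNReal.ofReal (p i) • Measure.dirac (x i)) =
      (∑ j, ENNReal.ofReal (q j) • Measure.dirac (y j)) ↔
    ∀ z : X, (∑ i ∈ univ.filter fun i => x i = z, p i)
           = (∑ j ∈ univ.filter fun j => y j = z, q j) := by
  classical
  constructor
  · intro h z
    have h1 := congrArg (fun μ : Measure X => μ {z}) h
    simp only [measure_apply] at h1
    have e1 : ∑ i, (if x i ∈ ({z} : Set X) then ENNReal.ofReal (p i) else 0)
        = ENNReal.ofReal (∑ i ∈ univ.filter fun i => x i = z, p i) := by
      rw [ENNReal.ofReal_sum_of_nonneg (fun i _ => hp i), Finset.sum_filter]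
      refine Finset.sum_congr rfl fun i _ => ?_
      by_cases hxi : x i = z <;> simp [hxi]
    have e2 : ∑ j, (if y j ∈ ({z} : Set X) then ENNReal.ofReal (q j) else 0)
        = ENNReal.ofReal (∑ j ∈ univ.filter fun j => y j = z, q j) := by
      rw [ENNReal.ofReal_sum_of_nonneg (fun j _ => hq j), Finset.sum_filter]
      refine Finset.sum_congr rfl fun j _ => ?_
      by_cases hyj : y j = z <;> simp [hyj]
    replace h1 : ENNReal.ofReal (∑ i ∈ univ.filter fun i => x i = z, p i)
        = ENNReal.ofReal (∑ j ∈ univ.filter fun j => y j = z, q j) := by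
      rw [← e1, ← e2]; convert h1
    exact (ENNReal.ofReal_eq_ofReal_iff
      (Finset.sum_nonneg fun i _ => hp i) (Finset.sum_nonneg fun j _ => hq j)).mp h1
  · intro h
    ext s hs
    rw [measure_apply, measure_apply]
    set T : Finset X := (Finset.univ.image x) ∪ (Finset.univ.image y) with hT
    have hxT : ∀ i : Fin M, x i ∈ T := fun i => by
      simp [hT, Finset.mem_union, Finset.mem_image]
    have hyT : ∀ j : Fin N, y j ∈ T := fun j => by
      simp [hT, Finset.mem_union, Finset.mem_image]
    rw [← Finset.sum_fiberwise_of_maps_to (fun i _ => hxT i)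
        (fun i => if x i ∈ s then ENNReal.ofReal (p i) else 0),
      ← Finset.sum_fiberwise_of_maps_to (fun j _ => hyT j)
        (fun j => if y j ∈ s then ENNReal.ofReal (q j) else 0)]
    refine Finset.sum_congr rfl fun z _ => ?_
    have e1 : ∑ i ∈ univ.filter (fun i => x i = z),
        (if x i ∈ s then ENNReal.ofReal (p i) else 0)
        = if z ∈ s then ENNReal.ofReal (∑ i ∈ univ.filter fun i => x i = z, p i) else 0 := by
      rw [ENNReal.ofReal_sum_of_nonneg (fun i _ => hp i)]
      by_cases hzs : z ∈ s
      · simp only [hzs, if_true]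
        refine Finset.sum_congr rfl fun i hi => ?_
        have : x i = z := (Finset.mem_filter.mp hi).2
        simp [this, hzs]
      · simp only [hzs, if_false]
        refine Finset.sum_eq_zero fun i hi => ?_
        have : x i = z := (Finset.mem_filter.mp hi).2
        simp [this, hzs]
    have e2 : ∑ j ∈ univ.filter (fun j => y j = z),
        (if y j ∈ s then ENNReal.ofReal (q j) else 0)
        = if z ∈ s then ENNReal.ofReal (∑ j ∈ univ.filter fun j => y j = z, q j) else 0 := by
      rw [ENNReal.ofReal_sum_of_nonneg (fun j _ => hq j)]
      by_cases hzs : z ∈ s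
      · simp only [hzs, if_true]
        refine Finset.sum_congr rfl fun j hj => ?_
        have : y j = z := (Finset.mem_filter.mp hj).2
        simp [this, hzs]
      · simp only [hzs, if_false]
        refine Finset.sum_eq_zero fun j hj => ?_
        have : y j = z := (Finset.mem_filter.mp hj).2
        simp [this, hzs]
    rw [e1, e2, h z]

/-- If pointwise masses agree, the zero value is attained by an explicit coupling. -/
lemma zero_mem {x : Fin M → X} {y : Fin N → X} {p : Fin M → ℝ} {q : Fin N → ℝ}
    (hp : ∀ i, 0 ≤ p i) (hq : ∀ j, 0 ≤ q j)
    (hPQ : ∀ z : X, (∑ i ∈ univ.filter fun i => x i = z, p i)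
           = (∑ j ∈ univ.filter fun j => y j = z, q j))
    {c : X → X → ℝ} (hceq : ∀ a b : X, c a b = 0 ↔ a = b) :
    (0 : ℝ) ∈ discreteOTValues x y p q c := by
  classical
  set D : X → ℝ := fun z => ∑ j ∈ univ.filter fun j => y j = z, q j with hD
  have hDnn : ∀ z, 0 ≤ D z := fun z => Finset.sum_nonneg fun j _ => hq j
  refine ⟨fun i j => if x i = y j then p i * q j / D (x i) else 0, ?_, ?_, ?_, ?_⟩
  · intro i j
    by_cases h : x i = y j <;>
      simp [h, div_nonneg (mul_nonneg (hp i) (hq j)) (hDnn _)]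
  · intro i
    have : ∑ j, (if x i = y j then p i * q j / D (x i) else 0)
        = ∑ j ∈ univ.filter (fun j => y j = x i), p i * q j / D (x i) := by
      rw [Finset.sum_filter]
      exact Finset.sum_congr rfl fun j _ => if_congr eq_comm rfl rfl
    rw [this]
    by_cases hD0 : D (x i) = 0
    · have hPz : (∑ i' ∈ univ.filter fun i' => x i' = x i, p i') = 0 := by
        rw [hPQ (x i)]; exact hD0
      have hpi : p i = 0 := by
        have hmem : i ∈ univ.filter fun i' => x i' = x i := by simp
        have := Finset.single_le_sum (f := p) (fun i' _ => hp i') hmem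
        linarith [this.trans_eq hPz, hp i]
      simp [hpi]
    · rw [← Finset.sum_div, ← Finset.mul_sum]
      have : (∑ j ∈ univ.filter fun j => y j = x i, q j) = D (x i) := rfl
      rw [this, mul_div_assoc, div_self hD0, mul_one]
  · intro j
    have e : ∑ i, (if x i = y j then p i * q j / D (x i) else 0)
        = ∑ i ∈ univ.filter (fun i => x i = y j), p i * q j / D (y j) := by
      rw [Finset.sum_filter]
      refine Finset.sum_congr rfl fun i _ => ?_
      by_cases h : x i = y j
      · simp [h]
      · simp [h]
    rw [e]
    by_cases hD0 : D (y j) = 0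
    · have hqj : q j = 0 := by
        have hmem : j ∈ univ.filter fun j' => y j' = y j := by simp
        have := Finset.single_le_sum (f := q) (fun j' _ => hq j') hmem
        have hDj : D (y j) = ∑ j' ∈ univ.filter fun j' => y j' = y j, q j' := rfl
        rw [hDj] at hD0
        linarith [this.trans_eq hD0, hq j]
      simp [hqj]
    · calc ∑ i ∈ univ.filter (fun i => x i = y j), p i * q j / D (y j)
          = ∑ i ∈ univ.filter (fun i => x i = y j), p i * (q j / D (y j)) := by
            exact Finset.sum_congr rfl fun i _ => mul_div_assoc _ _ _
        _ = (∑ i ∈ univ.filter (fun i => x i = y j), p i) * (q j / D (y j)) :=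
            (Finset.sum_mul _ _ _).symm
        _ = D (y j) * (q j / D (y j)) := by rw [hPQ (y j)]
        _ = q j := by rw [mul_comm, div_mul_cancel₀ _ hD0]
  · symm
    refine Finset.sum_eq_zero fun i _ => Finset.sum_eq_zero fun j _ => ?_
    by_cases h : x i = y j
    · rw [(hceq (x i) (y j)).mpr h, zero_mul]
    · simp [h]

end DOTAux

theorem discrete_OT_with_divergence_groundcost_is_divergence
    {X : Type*} [MeasurableSpace X] [MeasurableSingletonClass X]
    {M N : ℕ} (x : Fin M → X) (y : Fin N → X)
    (p : Fin M → ℝ) (q : Fin N → ℝ)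
    (hp : ∀ i, 0 ≤ p i) (hq : ∀ j, 0 ≤ q j)
    (hps : ∑ i, p i = 1) (hqs : ∑ j, q j = 1)
    (c : X → X → ℝ) (hc0 : ∀ a b, 0 ≤ c a b) (hceq : ∀ a b : X, c a b = 0 ↔ a = b) :
    0 ≤ sInf (discreteOTValues x y p q c) ∧
    (sInf (discreteOTValues x y p q c) = 0 ↔
      (∑ i, ENNReal.ofReal (p i) • Measure.dirac (x i)) =
      (∑ j, ENNReal.ofReal (q j) • Measure.dirac (y j))) := by
  have hne := DOTAux.values_nonempty x y hp hq hps hqs c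
  have hbdd : BddBelow (discreteOTValues x y p q c) :=
    ⟨0, fun v hv => DOTAux.values_nonneg hc0 v hv⟩
  have hnn : 0 ≤ sInf (discreteOTValues x y p q c) :=
    le_csInf hne (DOTAux.values_nonneg hc0)
  refine ⟨hnn, ?_, ?_⟩
  · intro h0
    rw [DOTAux.measure_eq_iff x y hp hq]
    intro z
    by_contra hne'
    rcases lt_or_gt_of_ne hne' with hlt | hlt
    · -- P z < Q z : use symmetric form
      obtain ⟨ε, hεpos, hεlb⟩ := DOTAux.key_lb hq hqs hps
        (fun a b => hc0 b a) (fun a b => (hceq b a).trans eq_comm) z hlt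
      rw [← DOTAux.values_symm] at hεlb
      have := le_csInf hne hεlb
      rw [h0] at this
      linarith
    · obtain ⟨ε, hεpos, hεlb⟩ := DOTAux.key_lb hp hps hqs hc0 hceq z hlt
      have := le_csInf hne hεlb
      rw [h0] at this
      linarith
  · intro hmeq
    have hPQ := (DOTAux.measure_eq_iff x y hp hq).mp hmeq
    have h0mem := DOTAux.zero_mem hp hq hPQ hceq
    exact le_antisymm (csInf_le hbdd h0mem) hnn
end

section
/- Let (Ω, P) be a probability space, let M ≥ 1, t > 0, δ > 0, let C¹ : Fin M → Fin M → ℝ be a fixed cost matrix, and let C² : Ω → (Fin M → Fin M → ℝ) be a random cost matrix whose entries ω ↦ C²(ω) i j are all measurable. If for every pair (i,j) one has P({ω : |C¹ i j − C²(ω) i j| ≥ t}) ≤ δ/M², then P({ω : |L(C¹) − L(C²(ω))| ≥ t}) ≤ δ. -/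
/-!
Perturbing the cost matrix by at most `e` in every entry moves the cost of each coupling by at
most `e` (a coupling has total mass at most one), hence moves the optimal transport value by at
most `e`: `L` is 1-Lipschitz for the entrywise sup norm. So if `|L(C¹) - L(C²)| ≥ t`, some entry
satisfies `|C¹ i j - C² i j| ≥ t`, and a union bound over the `M²` entries gives the estimate.
-/

open MeasureTheory

/-- The uniform coupling polytope `Π_M`: matrices with nonnegative entries and
all row sums and column sums equal to `1/M`. -/
def uniformCouplings (M : ℕ) : Set (Fin M → Fin M → ℝ) :=
  {π | (∀ i j, 0 ≤ π i j) ∧ (∀ i, ∑ j, π i j = 1 / M) ∧ (∀ j, ∑ i, π i j = 1 / M)}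

/-- The optimal transport value of a cost matrix `C` over the uniform coupling
polytope (the infimum, which is attained). -/
noncomputable def OTvalue {M : ℕ} (C : Fin M → Fin M → ℝ) : ℝ :=
  sInf {v | ∃ π ∈ uniformCouplings M, v = ∑ i, ∑ j, C i j * π i j}

theorem exists_le_abs_of_le_norm {ι κ : Type*} [Fintype ι] [Fintype κ] {t : ℝ} (ht : 0 < t)
    {C : ι → κ → ℝ} (h : t ≤ ‖C‖) : ∃ i j, t ≤ |C i j| := by
  by_contra! hlt
  exact h.not_gt <| (pi_norm_lt_iff ht).2 fun i => (pi_norm_lt_iff ht).2 (hlt i)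

theorem ENNReal.sum_sum_ofReal_div_sq_le (M : ℕ) (δ : ℝ) :
    ∑ _i : Fin M, ∑ _j : Fin M, ENNReal.ofReal (δ / M ^ 2) ≤ ENNReal.ofReal δ := by
  rcases M.eq_zero_or_pos with rfl | hM
  · simp
  simp only [Finset.sum_const, Finset.card_univ, Fintype.card_fin, nsmul_eq_mul, ← mul_assoc]
  rw [← Nat.cast_mul, ← ENNReal.ofReal_natCast, ← ENNReal.ofReal_mul (by positivity),
    Nat.cast_mul, ← sq, mul_div_cancel₀ _ (by positivity)]

namespace uniformCouplings

variable {M : ℕ}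

theorem const_mem (M : ℕ) : (fun _ _ => 1 / (M : ℝ) ^ 2) ∈ uniformCouplings M := by
  refine ⟨fun _ _ => by positivity, fun _ => ?_, fun _ => ?_⟩ <;>
  · rcases M.eq_zero_or_pos with rfl | hM
    · simp
    · simp only [Finset.sum_const, Finset.card_univ, Fintype.card_fin, nsmul_eq_mul]
      field_simp

theorem sum_sum_le_one {π : Fin M → Fin M → ℝ} (hπ : π ∈ uniformCouplings M) :
    ∑ i, ∑ j, π i j ≤ 1 := by
  simp only [hπ.2.1, Finset.sum_const, Finset.card_univ, Fintype.card_fin, nsmul_eq_mul]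
  rcases M.eq_zero_or_pos with rfl | hM
  · simp
  · rw [mul_one_div_cancel (by positivity)]

theorem cost_sub_cost_le {π : Fin M → Fin M → ℝ} (hπ : π ∈ uniformCouplings M)
    (C C' : Fin M → Fin M → ℝ) :
    ∑ i, ∑ j, C i j * π i j - ∑ i, ∑ j, C' i j * π i j ≤ ‖C - C'‖ := by
  have hentry (i j) : (C - C') i j ≤ ‖C - C'‖ :=
    (Real.le_norm_self _).trans ((norm_le_pi_norm _ j).trans (norm_le_pi_norm _ i))
  calc ∑ i, ∑ j, C i j * π i j - ∑ i, ∑ j, C' i j * π i j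
      = ∑ i, ∑ j, (C - C') i j * π i j := by
        simp only [← Finset.sum_sub_distrib, Pi.sub_apply, sub_mul]
    _ ≤ ∑ i, ∑ j, ‖C - C'‖ * π i j := by
        gcongr with i _ j _
        · exact hπ.1 i j
        · exact hentry i j
    _ = ‖C - C'‖ * ∑ i, ∑ j, π i j := by simp only [Finset.mul_sum]
    _ ≤ ‖C - C'‖ := mul_le_of_le_one_right (norm_nonneg _) (sum_sum_le_one hπ)

end uniformCouplings

section OTvalue

variable {M : ℕ}

theorem OTvalue_le_cost {π : Fin M → Fin M → ℝ} (hπ : π ∈ uniformCouplings M)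
    (C : Fin M → Fin M → ℝ) : OTvalue C ≤ ∑ i, ∑ j, C i j * π i j := by
  refine csInf_le ⟨-‖C‖, ?_⟩ ⟨π, hπ, rfl⟩
  rintro v ⟨σ, hσ, rfl⟩
  have := uniformCouplings.cost_sub_cost_le hσ 0 C
  simp only [Pi.zero_apply, zero_mul, Finset.sum_const_zero, zero_sub, norm_neg] at this
  linarith

theorem le_OTvalue {C : Fin M → Fin M → ℝ} {a : ℝ}
    (h : ∀ π ∈ uniformCouplings M, a ≤ ∑ i, ∑ j, C i j * π i j) : a ≤ OTvalue C := by
  refine le_csInf ⟨_, _, uniformCouplings.const_mem M, rfl⟩ ?_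
  rintro v ⟨π, hπ, rfl⟩
  exact h π hπ

theorem OTvalue_le_add_norm_sub (C C' : Fin M → Fin M → ℝ) :
    OTvalue C ≤ OTvalue C' + ‖C - C'‖ := by
  rw [← sub_le_iff_le_add]
  refine le_OTvalue fun π hπ => ?_
  have := OTvalue_le_cost hπ C
  have := uniformCouplings.cost_sub_cost_le hπ C C'
  linarith

theorem abs_OTvalue_sub_le (C C' : Fin M → Fin M → ℝ) :
    |OTvalue C - OTvalue C'| ≤ ‖C - C'‖ := by
  rw [abs_sub_le_iff]
  have := OTvalue_le_add_norm_sub C C'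
  have := OTvalue_le_add_norm_sub C' C
  rw [norm_sub_rev] at this
  constructor <;> linarith

end OTvalue

theorem prob_OT_value_diff_ge_le_of_entrywise_general
    {Ω : Type*} [MeasurableSpace Ω] (P : Measure Ω)
    {M : ℕ} {t δ : ℝ} (ht : 0 < t)
    (C1 : Fin M → Fin M → ℝ) (C2 : Ω → Fin M → Fin M → ℝ)
    (hentry : ∀ i j, P {ω | t ≤ |C1 i j - C2 ω i j|} ≤ ENNReal.ofReal (δ / M ^ 2)) :
    P {ω | t ≤ |OTvalue C1 - OTvalue (C2 ω)|} ≤ ENNReal.ofReal δ := by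
  have hsub : {ω | t ≤ |OTvalue C1 - OTvalue (C2 ω)|} ⊆
      ⋃ i, ⋃ j, {ω | t ≤ |C1 i j - C2 ω i j|} := fun ω hω => by
    obtain ⟨i, j, hij⟩ :=
      exists_le_abs_of_le_norm ht (hω.trans (abs_OTvalue_sub_le _ _))
    exact Set.mem_iUnion₂.2 ⟨i, j, hij⟩
  calc P {ω | t ≤ |OTvalue C1 - OTvalue (C2 ω)|}
      ≤ ∑ i, ∑ j, P {ω | t ≤ |C1 i j - C2 ω i j|} :=
        (measure_mono hsub).trans <| (measure_iUnion_fintype_le _ _).trans <|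
          Finset.sum_le_sum fun i _ => measure_iUnion_fintype_le _ _
    _ ≤ ∑ _i : Fin M, ∑ _j : Fin M, ENNReal.ofReal (δ / M ^ 2) := by
        gcongr with i _ j _
        exact hentry i j
    _ ≤ ENNReal.ofReal δ := ENNReal.sum_sum_ofReal_div_sq_le M δ

theorem prob_OT_value_diff_ge_le_of_entrywise
    {Ω : Type*} [MeasurableSpace Ω] (P : Measure Ω) [IsProbabilityMeasure P]
    {M : ℕ} (hM : 1 ≤ M) {t δ : ℝ} (ht : 0 < t) (hδ : 0 < δ)
    (C1 : Fin M → Fin M → ℝ) (C2 : Ω → Fin M → Fin M → ℝ)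
    (hmeas : ∀ i j, Measurable (fun ω => C2 ω i j))
    (hentry : ∀ i j, P {ω | t ≤ |C1 i j - C2 ω i j|} ≤ ENNReal.ofReal (δ / M ^ 2)) :
    P {ω | t ≤ |OTvalue C1 - OTvalue (C2 ω)|} ≤ ENNReal.ofReal δ :=
  prob_OT_value_diff_ge_le_of_entrywise_general P ht C1 C2 hentry
end

section
/- Let X_1, …, X_N be independent identically distributed random variables on a probability space, each taking values in the interval [0,1] almost surely, with common mean p satisfying 0 < p ≤ 1, and set X̄ = (1/N) ∑_{i=1}^N X_i. Then: (i) √p − (1−p)/(2N√p) ≤ E[√X̄] ≤ √p; and (ii) Var(√X̄) ≤ (1−p)/N + (1−p)²/(4N²p). -/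
/-!
The sample mean `Y` takes values in `[0, 1]`, has mean `p` and, by the Bhatia–Davis inequality and
independence, variance at most `p (1 - p) / N`. Jensen gives `E √Y ≤ √p`. For the lower bound,
integrate `√y ≥ √p + (y - p) / (2√p) - (y - p)² / (2p√p)`: the linear term has mean zero and the
quadratic one has mean `Var Y / (2p√p)`. Combining both bounds with `E (√Y)² = E Y`,
`Var √Y = (√p - E √Y)(√p + E √Y) ≤ Var Y / (2p√p) ⋅ 2√p = Var Y / E Y`.
-/

open MeasureTheory ProbabilityTheory

lemma sq_sub_sq_le_two_mul_of_sub_le {α : Type*} [CommRing α] [LinearOrder α]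
    [IsStrictOrderedRing α] {a c m : α} (hm : 0 ≤ m) (hma : m ≤ a) (ham : a - c ≤ m) :
    a ^ 2 - m ^ 2 ≤ 2 * a * c := by
  nlinarith

namespace Real

lemma sqrt_add_sub_div_sub_sq_div_le_sqrt {p y : ℝ} (hp : 0 < p) (hy : 0 ≤ y) :
    √p + (y - p) / (2 * √p) - (y - p) ^ 2 / (2 * p * √p) ≤ √y := by
  obtain ⟨s, hs, rfl⟩ : ∃ s, 0 < s ∧ p = s ^ 2 := ⟨√p, sqrt_pos.2 hp, (sq_sqrt hp.le).symm⟩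
  obtain ⟨t, ht, rfl⟩ : ∃ t, 0 ≤ t ∧ y = t ^ 2 := ⟨√y, sqrt_nonneg y, (sq_sqrt hy).symm⟩
  rw [sqrt_sq hs.le, sqrt_sq ht, ← sub_nonneg]
  have hgap : t - (s + (t ^ 2 - s ^ 2) / (2 * s) - (t ^ 2 - s ^ 2) ^ 2 / (2 * s ^ 2 * s))
      = t * (t - s) ^ 2 * (t + 2 * s) / (2 * s ^ 3) := by
    field_simp
    ring
  rw [hgap]
  positivity

end Real

section SqrtOfRandomVariable

variable {Ω : Type*} [MeasurableSpace Ω] {μ : Measure Ω} {Y : Ω → ℝ}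

lemma MeasureTheory.Integrable.sqrt [IsFiniteMeasure μ] (hY : Integrable Y μ) :
    Integrable (fun ω => √(Y ω)) μ := by
  refine ((integrable_const 1).add hY.abs).mono'
    (Real.continuous_sqrt.comp_aestronglyMeasurable hY.aestronglyMeasurable) ?_
  refine ae_of_all μ fun ω => ?_
  change ‖√(Y ω)‖ ≤ 1 + |Y ω|
  rw [Real.norm_of_nonneg (Real.sqrt_nonneg _)]
  refine Real.sqrt_le_iff.2 ⟨by positivity, ?_⟩
  nlinarith [abs_nonneg (Y ω), le_abs_self (Y ω)]

lemma integral_sq_sqrt (hY0 : 0 ≤ᵐ[μ] Y) : ∫ ω, √(Y ω) ^ 2 ∂μ = μ[Y] :=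
  integral_congr_ae (hY0.mono fun _ hω => Real.sq_sqrt hω)

variable [IsProbabilityMeasure μ]

lemma integral_sqrt_le_sqrt_integral (hY0 : 0 ≤ᵐ[μ] Y) (hY : Integrable Y μ) :
    ∫ ω, √(Y ω) ∂μ ≤ √(μ[Y]) :=
  Real.strictConcaveOn_sqrt.concaveOn.le_map_integral Real.continuous_sqrt.continuousOn
    isClosed_Ici hY0 hY hY.sqrt

lemma sqrt_integral_sub_div_le_integral_sqrt {v : ℝ} (hY0 : 0 ≤ᵐ[μ] Y) (hY : MemLp Y 2 μ)
    (hp : 0 < μ[Y]) (hv : Var[Y; μ] ≤ v) :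
    √(μ[Y]) - v / (2 * μ[Y] * √(μ[Y])) ≤ ∫ ω, √(Y ω) ∂μ := by
  set p := μ[Y]
  have hYint : Integrable Y μ := hY.integrable one_le_two
  have hlin : Integrable (fun ω => (Y ω - p) / (2 * √p)) μ :=
    (hYint.sub (integrable_const p)).div_const _
  have htangent : Integrable (fun ω => √p + (Y ω - p) / (2 * √p)) μ :=
    (integrable_const _).add hlin
  have hquad : Integrable (fun ω => (Y ω - p) ^ 2 / (2 * p * √p)) μ :=
    (hY.sub (memLp_const p)).integrable_sq.div_const _
  have hlin_zero : ∫ ω, (Y ω - p) / (2 * √p) ∂μ = 0 := by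
    rw [integral_div, integral_sub hYint (integrable_const p)]
    simp [p]
  have hquad_var : ∫ ω, (Y ω - p) ^ 2 / (2 * p * √p) ∂μ = Var[Y; μ] / (2 * p * √p) := by
    rw [integral_div, variance_eq_integral hY.aemeasurable]
  have : 0 < √p := Real.sqrt_pos.2 hp
  calc √p - v / (2 * p * √p) ≤ √p - Var[Y; μ] / (2 * p * √p) := by gcongr
    _ = ∫ ω, (√p + (Y ω - p) / (2 * √p) - (Y ω - p) ^ 2 / (2 * p * √p)) ∂μ := by
        rw [integral_sub htangent hquad, integral_add (integrable_const _) hlin, hlin_zero,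
          hquad_var]
        simp
    _ ≤ ∫ ω, √(Y ω) ∂μ := by
        refine integral_mono_ae (htangent.sub hquad) hYint.sqrt ?_
        filter_upwards [hY0] with ω hω
        exact Real.sqrt_add_sub_div_sub_sq_div_le_sqrt hp hω

lemma integral_sq_sqrt_sub_sq_integral_sqrt_le {v : ℝ} (hY0 : 0 ≤ᵐ[μ] Y) (hY : MemLp Y 2 μ)
    (hp : 0 < μ[Y]) (hv : Var[Y; μ] ≤ v) :
    ∫ ω, √(Y ω) ^ 2 ∂μ - (∫ ω, √(Y ω) ∂μ) ^ 2 ≤ v / μ[Y] := by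
  have hvar := sq_sub_sq_le_two_mul_of_sub_le (integral_nonneg fun ω => Real.sqrt_nonneg _)
    (integral_sqrt_le_sqrt_integral hY0 (hY.integrable one_le_two))
    (sqrt_integral_sub_div_le_integral_sqrt hY0 hY hp hv)
  have : 0 < √(μ[Y]) := Real.sqrt_pos.2 hp
  rw [integral_sq_sqrt hY0]
  calc _ ≤ 2 * √(μ[Y]) * (v / (2 * μ[Y] * √(μ[Y]))) := by
        rwa [Real.sq_sqrt hp.le] at hvar
    _ = v / μ[Y] := by field_simp

end SqrtOfRandomVariable

section SampleMean

variable {Ω ι : Type*} [MeasurableSpace Ω] {μ : Measure Ω} [Fintype ι]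

noncomputable def sampleMean (X : ι → Ω → ℝ) (ω : Ω) : ℝ :=
  (1 / Fintype.card ι) * ∑ i, X i ω

lemma sampleMean_mem_Icc {X : ι → Ω → ℝ} (hX : ∀ i, ∀ᵐ ω ∂μ, X i ω ∈ Set.Icc (0 : ℝ) 1) :
    ∀ᵐ ω ∂μ, sampleMean X ω ∈ Set.Icc (0 : ℝ) 1 := by
  filter_upwards [ae_all_iff.2 hX] with ω hω
  have hsum : ∑ i, X i ω ≤ Fintype.card ι := by
    simpa using Finset.sum_le_sum fun i (_ : i ∈ Finset.univ) => (hω i).2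
  rw [sampleMean, one_div_mul_eq_div]
  exact ⟨div_nonneg (Finset.sum_nonneg fun i _ => (hω i).1) (Nat.cast_nonneg _),
    div_le_one_of_le₀ hsum (Nat.cast_nonneg _)⟩

lemma integral_sampleMean [Nonempty ι] {X : ι → Ω → ℝ} {p : ℝ} (hX : ∀ i, Integrable (X i) μ)
    (hmean : ∀ i, μ[X i] = p) : μ[sampleMean X] = p := by
  simp only [sampleMean]
  rw [integral_const_mul, integral_finsetSum _ fun i _ => hX i]
  simp only [hmean, Finset.sum_const, Finset.card_univ, nsmul_eq_mul]
  field_simp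

lemma variance_sampleMean_le {X : ι → Ω → ℝ} {v : ℝ} (hX : ∀ i, MemLp (X i) 2 μ)
    (hindep : Pairwise fun i j => X i ⟂ᵢ[μ] X j) (hvar : ∀ i, Var[X i; μ] ≤ v) :
    Var[sampleMean X; μ] ≤ v / Fintype.card ι := by
  have hsum : Var[∑ i, X i; μ] = ∑ i, Var[X i; μ] :=
    IndepFun.variance_sum (fun i _ => hX i) fun i _ j _ hij => hindep hij
  calc Var[sampleMean X; μ] = (1 / Fintype.card ι) ^ 2 * ∑ i, Var[X i; μ] := by
        rw [← hsum, ← variance_const_mul]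
        congr with ω
        simp [sampleMean]
    _ ≤ (1 / Fintype.card ι) ^ 2 * (Fintype.card ι * v) := by
        gcongr
        simpa using Finset.sum_le_sum fun i (_ : i ∈ Finset.univ) => hvar i
    _ = v / Fintype.card ι := by field_simp

end SampleMean

theorem sqrt_sample_mean_expectation_and_variance_bounds_general
    {Ω : Type*} [MeasurableSpace Ω] (μ : Measure Ω) [IsProbabilityMeasure μ]
    {N : ℕ} (hN : 1 ≤ N) (X : Fin N → Ω → ℝ)
    (hmeas : ∀ i, Measurable (X i))
    (hindep : iIndepFun X μ)
    (hrange : ∀ i, ∀ᵐ ω ∂μ, X i ω ∈ Set.Icc (0 : ℝ) 1)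
    {p : ℝ} (hp0 : 0 < p)
    (hmean : ∀ i, ∫ ω, X i ω ∂μ = p) :
    (Real.sqrt p - (1 - p) / (2 * N * Real.sqrt p) ≤
        ∫ ω, Real.sqrt ((1 / N) * ∑ i, X i ω) ∂μ) ∧
    (∫ ω, Real.sqrt ((1 / N) * ∑ i, X i ω) ∂μ ≤ Real.sqrt p) ∧
    ((∫ ω, (Real.sqrt ((1 / N) * ∑ i, X i ω)) ^ 2 ∂μ) -
        (∫ ω, Real.sqrt ((1 / N) * ∑ i, X i ω) ∂μ) ^ 2 ≤
      (1 - p) / N + (1 - p) ^ 2 / (4 * N ^ 2 * p)) := by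
  have : Nonempty (Fin N) := ⟨⟨0, hN⟩⟩
  have hXL2 i : MemLp (X i) 2 μ := memLp_of_bounded (hrange i) (hmeas i).aestronglyMeasurable 2
  have hY01 := sampleMean_mem_Icc (μ := μ) hrange
  have hYL2 : MemLp (sampleMean X) 2 μ := memLp_of_bounded hY01
    ((Finset.measurable_sum _ fun i _ => hmeas i).const_mul _).aestronglyMeasurable 2
  have hY0 : 0 ≤ᵐ[μ] sampleMean X := hY01.mono fun _ h => h.1
  have hYmean : μ[sampleMean X] = p :=
    integral_sampleMean (fun i => (hXL2 i).integrable one_le_two) hmean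
  have hYvar : Var[sampleMean X; μ] ≤ (1 - p) * p / N := by
    simpa using variance_sampleMean_le hXL2 (fun i j hij => hindep.indepFun hij) fun i => by
      simpa [hmean i] using variance_le_sub_mul_sub (hrange i) (hmeas i).aemeasurable
  have hlower := sqrt_integral_sub_div_le_integral_sqrt hY0 hYL2 (hYmean ▸ hp0) hYvar
  have hupper := integral_sqrt_le_sqrt_integral hY0 (hYL2.integrable one_le_two)
  have hvar := integral_sq_sqrt_sub_sq_integral_sqrt_le hY0 hYL2 (hYmean ▸ hp0) hYvar
  have hsample ω : (1 / N : ℝ) * ∑ i, X i ω = sampleMean X ω := by simp [sampleMean]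
  simp only [hsample]
  rw [hYmean] at hlower hupper hvar
  have : 0 < √p := Real.sqrt_pos.2 hp0
  refine ⟨le_of_eq_of_le ?_ hlower, hupper, le_add_of_le_of_nonneg (hvar.trans_eq ?_) ?_⟩
  · field_simp
  · field_simp
  · positivity

theorem sqrt_sample_mean_expectation_and_variance_bounds
    {Ω : Type*} [MeasurableSpace Ω] (μ : Measure Ω) [IsProbabilityMeasure μ]
    {N : ℕ} (hN : 1 ≤ N) (X : Fin N → Ω → ℝ)
    (hmeas : ∀ i, Measurable (X i))
    (hindep : iIndepFun X μ)
    (hident : ∀ i j, IdentDistrib (X i) (X j) μ μ)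
    (hrange : ∀ i, ∀ᵐ ω ∂μ, X i ω ∈ Set.Icc (0 : ℝ) 1)
    {p : ℝ} (hp0 : 0 < p) (hp1 : p ≤ 1)
    (hmean : ∀ i, ∫ ω, X i ω ∂μ = p) :
    (Real.sqrt p - (1 - p) / (2 * N * Real.sqrt p) ≤
        ∫ ω, Real.sqrt ((1 / N) * ∑ i, X i ω) ∂μ) ∧
    (∫ ω, Real.sqrt ((1 / N) * ∑ i, X i ω) ∂μ ≤ Real.sqrt p) ∧
    ((∫ ω, (Real.sqrt ((1 / N) * ∑ i, X i ω)) ^ 2 ∂μ) -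
        (∫ ω, Real.sqrt ((1 / N) * ∑ i, X i ω) ∂μ) ^ 2 ≤
      (1 - p) / N + (1 - p) ^ 2 / (4 * N ^ 2 * p)) :=
  sqrt_sample_mean_expectation_and_variance_bounds_general μ hN X hmeas hindep hrange hp0 hmean
end

section
/- Let H be a complex inner product space and let u, v, w ∈ H be unit vectors. Then the pure-state trace distance d(x,y) = √(1 − |⟨x,y⟩|²) satisfies the triangle inequality: √(1 − |⟨u,w⟩|²) ≤ √(1 − |⟨u,v⟩|²) + √(1 − |⟨v,w⟩|²). -/
/-!
Write `u = ⟪v, u⟫ v + u'` and `w = ⟪v, w⟫ v + w'` with `u', w'` orthogonal to `v`. Then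
`‖u'‖ = d(u, v)`, `‖w'‖ = d(v, w)` and `⟪u, w⟫ = ⟪u, v⟫ ⟪v, w⟫ + ⟪u', w'⟫`, so Cauchy–Schwarz gives
`|⟪u, w⟫| ≥ a b - s t` with `a = |⟪u, v⟫|`, `s = d(u, v)`, `b = |⟪v, w⟫|`, `t = d(v, w)`. What is left
is real: since `a² + s² = b² + t² = 1`, `1 - (a b - s t)² = (a t + b s)² ≤ (s + t)²`.
-/

open scoped InnerProductSpace

section
variable {𝕜 H : Type*} [RCLike 𝕜] [NormedAddCommGroup H] [InnerProductSpace 𝕜 H]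

theorem norm_sub_inner_smul_sq {v : H} (hv : ‖v‖ = 1) (u : H) :
    ‖u - ⟪v, u⟫_𝕜 • v‖ ^ 2 = ‖u‖ ^ 2 - ‖⟪v, u⟫_𝕜‖ ^ 2 := by
  rw [@norm_sub_sq 𝕜, inner_smul_right, ← inner_conj_symm v u, RCLike.conj_mul, norm_smul, hv]
  simp only [← RCLike.ofReal_pow, RCLike.ofReal_re, RCLike.norm_conj, mul_one]
  ring

theorem inner_eq_inner_mul_inner_add_inner_sub_inner_smul {v : H} (hv : ‖v‖ = 1) (u w : H) :
    ⟪u, w⟫_𝕜 = ⟪u, v⟫_𝕜 * ⟪v, w⟫_𝕜 + ⟪u - ⟪v, u⟫_𝕜 • v, w - ⟪v, w⟫_𝕜 • v⟫_𝕜 := by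
  have hvv : ⟪v, v⟫_𝕜 = 1 := by simp [inner_self_eq_norm_sq_to_K, hv]
  simp only [inner_sub_left, inner_sub_right, inner_smul_left, inner_smul_right, hvv, mul_one,
    inner_conj_symm]
  ring

theorem norm_inner_mul_norm_inner_sub_le {v : H} (hv : ‖v‖ = 1) (u w : H) :
    ‖⟪u, v⟫_𝕜‖ * ‖⟪v, w⟫_𝕜‖ - ‖u - ⟪v, u⟫_𝕜 • v‖ * ‖w - ⟪v, w⟫_𝕜 • v‖ ≤ ‖⟪u, w⟫_𝕜‖ := by
  rw [inner_eq_inner_mul_inner_add_inner_sub_inner_smul hv u w, ← norm_mul]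
  calc _ ≤ ‖⟪u, v⟫_𝕜 * ⟪v, w⟫_𝕜‖ - ‖⟪u - ⟪v, u⟫_𝕜 • v, w - ⟪v, w⟫_𝕜 • v⟫_𝕜‖ :=
        sub_le_sub_left (norm_inner_le_norm _ _) _
    _ ≤ _ := norm_sub_le_norm_add _ _
end

theorem sqrt_one_sub_sq_le_add {a b c s t : ℝ} (ha : 0 ≤ a) (hb : 0 ≤ b) (hs : 0 ≤ s)
    (ht : 0 ≤ t) (has : a ^ 2 + s ^ 2 = 1) (hbt : b ^ 2 + t ^ 2 = 1) (hc : 0 ≤ c)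
    (habc : a * b - s * t ≤ c) :
    √(1 - c ^ 2) ≤ s + t := by
  rw [← Real.sqrt_sq (add_nonneg hs ht)]
  refine Real.sqrt_le_sqrt ?_
  rcases le_or_gt 1 (s + t) with hst | hst
  · nlinarith
  · -- `(a b)² - (s t)² = 1 - s² - t² ≥ 1 - (s + t)² > 0`
    have hst_le_ab : s * t ≤ a * b := by
      nlinarith [mul_nonneg hs ht, mul_nonneg ha hb]
    have ha1 : a ≤ 1 := by nlinarith
    have hb1 : b ≤ 1 := by nlinarith
    calc 1 - c ^ 2 ≤ 1 - (a * b - s * t) ^ 2 := by nlinarith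
      _ = (a * t + b * s) ^ 2 := by linear_combination -(a ^ 2 + s ^ 2) * hbt - has
      _ ≤ (t + s) ^ 2 := by
        gcongr
        · exact mul_le_of_le_one_left ht ha1
        · exact mul_le_of_le_one_left hs hb1
      _ = (s + t) ^ 2 := by ring

theorem pure_state_trace_distance_triangle
    {H : Type*} [NormedAddCommGroup H] [InnerProductSpace ℂ H]
    (u v w : H) (hu : ‖u‖ = 1) (hv : ‖v‖ = 1) (hw : ‖w‖ = 1) :
    Real.sqrt (1 - ‖(inner ℂ u w : ℂ)‖ ^ 2) ≤
      Real.sqrt (1 - ‖(inner ℂ u v : ℂ)‖ ^ 2) + Real.sqrt (1 - ‖(inner ℂ v w : ℂ)‖ ^ 2) := by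
  have hs := norm_sub_inner_smul_sq (𝕜 := ℂ) hv u
  have ht := norm_sub_inner_smul_sq (𝕜 := ℂ) hv w
  rw [hu, one_pow, norm_inner_symm] at hs
  rw [hw, one_pow] at ht
  rw [← hs, ← ht, Real.sqrt_sq (norm_nonneg _), Real.sqrt_sq (norm_nonneg _)]
  exact sqrt_one_sub_sq_le_add (norm_nonneg _) (norm_nonneg _) (norm_nonneg _) (norm_nonneg _)
    (by linear_combination hs) (by linear_combination ht) (norm_nonneg _)
    (norm_inner_mul_norm_inner_sub_le (𝕜 := ℂ) hv u w)
end

section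
/- Let Y be a nonnegative random variable on a probability space with E[Y²] < ∞ and mean μ = E[Y] > 0. Then E[√Y] ≥ √μ · (1 − Var(Y)/(2μ²)), where Var(Y) = E[Y²] − μ². -/
/-! On `t ≥ 0` the square root dominates the quadratic `(3t - t²)/2`, which agrees with it at `0`
and touches it at `t = 1`. Applied to `t = Y/μ` and integrated, this bounds `E[√Y]` from below by
a combination of `E[Y] = μ` and `E[Y²]`, which is exactly the claimed bound. -/

open MeasureTheory

namespace Real

lemma three_mul_sub_sq_div_two_le_sqrt {t : ℝ} (ht : 0 ≤ t) : (3 * t - t ^ 2) / 2 ≤ √t := by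
  obtain ⟨s, hs, rfl⟩ : ∃ s, 0 ≤ s ∧ t = s ^ 2 := ⟨√t, sqrt_nonneg t, (sq_sqrt ht).symm⟩
  rw [sqrt_sq hs]
  -- `2s - 3s² + s⁴ = s (s - 1)² (s + 2)`
  nlinarith [mul_nonneg (mul_nonneg hs (sq_nonneg (s - 1))) (by linarith : 0 ≤ s + 2)]

lemma sqrt_div_mul_three_mul_sub_sq_le_sqrt {a y : ℝ} (ha : 0 < a) (hy : 0 ≤ y) :
    √a / (2 * a ^ 2) * (3 * a * y - y ^ 2) ≤ √y := by
  have hquad := three_mul_sub_sq_div_two_le_sqrt (div_nonneg hy ha.le)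
  calc √a / (2 * a ^ 2) * (3 * a * y - y ^ 2) = √a * ((3 * (y / a) - (y / a) ^ 2) / 2) := by
        field_simp
    _ ≤ √a * √(y / a) := by gcongr
    _ = √y := by rw [← sqrt_mul ha.le, mul_div_cancel₀ y ha.ne']

end Real

section Integrability

variable {α : Type*} [MeasurableSpace α] {P : Measure α} [IsFiniteMeasure P] {f : α → ℝ}

lemma integrable_of_integrable_sq (hf : AEStronglyMeasurable f P)
    (hf2 : Integrable (fun x => f x ^ 2) P) : Integrable f P :=
  ((memLp_two_iff_integrable_sq hf).2 hf2).integrable one_le_two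

lemma integrable_sqrt_of_nonneg (hf_nonneg : ∀ x, 0 ≤ f x) (hf : Integrable f P) :
    Integrable (fun x => √(f x)) P := by
  have hmeas : AEStronglyMeasurable (fun x => √(f x)) P :=
    Real.continuous_sqrt.comp_aestronglyMeasurable hf.aestronglyMeasurable
  refine integrable_of_integrable_sq hmeas (hf.congr (Filter.Eventually.of_forall fun x => ?_))
  exact (Real.sq_sqrt (hf_nonneg x)).symm

end Integrability

theorem integral_sqrt_ge_of_secondMoment
    {Ω : Type*} [MeasurableSpace Ω] (P : Measure Ω) [IsProbabilityMeasure P]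
    (Y : Ω → ℝ) (hYmeas : AEMeasurable Y P) (hYnonneg : ∀ ω, 0 ≤ Y ω)
    (hY2 : Integrable (fun ω => Y ω ^ 2) P)
    {μ : ℝ} (hμ : μ = ∫ ω, Y ω ∂P) (hμpos : 0 < μ) :
    Real.sqrt μ * (1 - ((∫ ω, Y ω ^ 2 ∂P) - μ ^ 2) / (2 * μ ^ 2)) ≤
      ∫ ω, Real.sqrt (Y ω) ∂P := by
  have hY1 : Integrable Y P := integrable_of_integrable_sq hYmeas.aestronglyMeasurable hY2
  have hlower : Integrable (fun ω => √μ / (2 * μ ^ 2) * (3 * μ * Y ω - Y ω ^ 2)) P :=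
    ((hY1.const_mul _).sub hY2).const_mul _
  calc √μ * (1 - ((∫ ω, Y ω ^ 2 ∂P) - μ ^ 2) / (2 * μ ^ 2))
      = √μ / (2 * μ ^ 2) * (3 * μ * μ - ∫ ω, Y ω ^ 2 ∂P) := by
        field_simp
        ring
    _ = ∫ ω, √μ / (2 * μ ^ 2) * (3 * μ * Y ω - Y ω ^ 2) ∂P := by
        rw [integral_const_mul, integral_sub (hY1.const_mul _) hY2, integral_const_mul, ← hμ]
    _ ≤ ∫ ω, √(Y ω) ∂P :=
        integral_mono hlower (integrable_sqrt_of_nonneg hYnonneg hY1)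
          fun ω => Real.sqrt_div_mul_three_mul_sub_sq_le_sqrt hμpos (hYnonneg ω)
end
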